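/- If |ψ⟩ and |φ⟩ are unit vectors in ℂ^d ⊗ ℂ^d with equal reduced states on the second factor (tr_H |ψ⟩⟨ψ| = tr_H |φ⟩⟨φ|, where tr_H traces out the first factor), then there exists a unitary U on ℂ^d (acting on the first factor) with |φ⟩ = (U ⊗ id)|ψ⟩. -/

import Mathlib

open Matrix Kronecker BigOperators
open scoped ComplexOrder

noncomputable def traceNorm {n : Type*} [Fintype n] [DecidableEq n] (X : Matrix n n ℂ) : ℝ :=
  (((Matrix.posSemidef_conjTranspose_mul_self X).1.eigenvectorUnitary.1 *
    diagonal (((↑) : ℝ → ℂ) ∘ (Real.sqrt ·) ∘ (Matrix.posSemidef_conjTranspose_mul_self X).1.eigenvalues) *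
    (star (Matrix.posSemidef_conjTranspose_mul_self X).1.eigenvectorUnitary : Matrix n n ℂ)).trace).re

noncomputable def hsNorm {n : Type*} [Fintype n] (X : Matrix n n ℂ) : ℝ :=
  Real.sqrt ((Xᴴ * X).trace.re)

noncomputable def singularValues {n : Type*} [Fintype n] [DecidableEq n] (Y : Matrix n n ℂ) :
    n → ℝ :=
  fun i => Real.sqrt ((Matrix.posSemidef_conjTranspose_mul_self Y).1.eigenvalues i)

/-- Partial transpose on the first tensor factor. -/
def ptransp {d k : ℕ} (X : Matrix (Fin d × Fin k) (Fin d × Fin k) ℂ) :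
    Matrix (Fin d × Fin k) (Fin d × Fin k) ℂ :=
  fun p q => X (q.1, p.2) (p.1, q.2)

/-- Partial trace over the first tensor factor. -/
noncomputable def ptraceH {d k : ℕ} (X : Matrix (Fin d × Fin k) (Fin d × Fin k) ℂ) :
    Matrix (Fin k) (Fin k) ℂ :=
  fun j j' => ∑ i, X (i, j) (i, j')

def vec {d : ℕ} (A : Matrix (Fin d) (Fin d) ℂ) : Fin d × Fin d → ℂ := fun p => A p.1 p.2

/-- Outer product |v⟩⟨w|. -/
def outer {n : Type*} (v w : n → ℂ) : Matrix n n ℂ := fun i j => v i * star (w j)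

/-- The swap operator F(e_i ⊗ e_j) = e_j ⊗ e_i. -/
def swapOp (d : ℕ) : Matrix (Fin d × Fin d) (Fin d × Fin d) ℂ :=
  fun p q => if p.1 = q.2 ∧ p.2 = q.1 then 1 else 0

/-- Blockwise action of Φ ⊗ id on operators on H ⊗ K. -/
def tensorExt {d k : ℕ} (Φ : Matrix (Fin d) (Fin d) ℂ → Matrix (Fin d) (Fin d) ℂ)
    (Z : Matrix (Fin d × Fin k) (Fin d × Fin k) ℂ) :
    Matrix (Fin d × Fin k) (Fin d × Fin k) ℂ :=
  fun p q => Φ (fun a b => Z (a, p.2) (b, q.2)) p.1 q.1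

/-- Diamond norm (stabilized at ancilla dimension d). -/
noncomputable def diamondNorm {d : ℕ}
    (Φ : Matrix (Fin d) (Fin d) ℂ → Matrix (Fin d) (Fin d) ℂ) : ℝ :=
  ⨆ ρ : {ρ : Matrix (Fin d × Fin d) (Fin d × Fin d) ℂ // ρ.PosSemidef ∧ ρ.trace = 1},
    traceNorm (tensorExt Φ ρ.1)

/-!
Write ψ = vec X and φ = vec Y. The reduced states are then the Gram matrices X Xᴴ and Y Yᴴ,
and (U ⊗ 1) vec X = vec (X Uᵀ), so it suffices to write Y = X V, i.e. Yᴴ = Vᴴ Xᴴ, with V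
unitary. Equal Gram matrices Mᴴ M = Nᴴ N mean ‖M x‖ = ‖N x‖ for every x, so M x ↦ N x is a
well-defined isometry on the range of M, and in finite dimensions it extends to a unitary of the
whole space.
-/

section GramFreedom

variable {𝕜 : Type*} [RCLike 𝕜]

theorem LinearMap.exists_linearIsometryEquiv_apply_eq_of_norm_eq {E V : Type*} [AddCommGroup E]
    [Module 𝕜 E] [NormedAddCommGroup V] [InnerProductSpace 𝕜 V] [FiniteDimensional 𝕜 V]
    (T S : E →ₗ[𝕜] V) (h : ∀ x, ‖T x‖ = ‖S x‖) :
    ∃ e : V ≃ₗᵢ[𝕜] V, ∀ x, e (T x) = S x := by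
  have hker : LinearMap.ker T ≤ LinearMap.ker S := fun x hx ↦ by
    rw [LinearMap.mem_ker, ← norm_eq_zero, ← h, LinearMap.mem_ker.mp hx, norm_zero]
  let G : LinearMap.range T →ₗ[𝕜] V :=
    (LinearMap.ker T).liftQ S hker ∘ₗ T.quotKerEquivRange.symm.toLinearMap
  have hG : ∀ x, G ⟨T x, LinearMap.mem_range_self T x⟩ = S x := fun x ↦ by
    simp [G, T.quotKerEquivRange_symm_apply_image]
  let L : LinearMap.range T →ₗᵢ[𝕜] V := ⟨G, by rintro ⟨_, x, rfl⟩; simp [hG, h]⟩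
  refine ⟨L.extend.toLinearIsometryEquiv rfl, fun x ↦ ?_⟩
  exact (L.extend_apply ⟨T x, LinearMap.mem_range_self T x⟩).trans (hG x)

variable {m n : Type*} [Fintype m] [DecidableEq m] [Fintype n] [DecidableEq n]

theorem Matrix.inner_toEuclideanLin_self (M : Matrix m n 𝕜) (x : EuclideanSpace 𝕜 n) :
    inner 𝕜 (toEuclideanLin M x) (toEuclideanLin M x) =
      inner 𝕜 x (toEuclideanLin (Mᴴ * M) x) := by
  rw [show toEuclideanLin (Mᴴ * M) = toEuclideanLin Mᴴ ∘ₗ toEuclideanLin M from toLpLin_mul_same ..,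
    toEuclideanLin_conjTranspose_eq_adjoint, LinearMap.comp_apply, LinearMap.adjoint_inner_right]

theorem Matrix.exists_mem_unitaryGroup_eq_mul_of_conjTranspose_mul_self_eq {M N : Matrix m n 𝕜}
    (h : Mᴴ * M = Nᴴ * N) : ∃ U ∈ unitaryGroup m 𝕜, N = U * M := by
  obtain ⟨e, he⟩ := (toEuclideanLin M).exists_linearIsometryEquiv_apply_eq_of_norm_eq
    (toEuclideanLin N) fun x ↦ by
      rw [← sq_eq_sq₀ (norm_nonneg _) (norm_nonneg _), ← inner_self_eq_norm_sq (𝕜 := 𝕜),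
        ← inner_self_eq_norm_sq (𝕜 := 𝕜), inner_toEuclideanLin_self, inner_toEuclideanLin_self, h]
  refine ⟨(toEuclideanCLM (n := m) (𝕜 := 𝕜)).symm
    (e : EuclideanSpace 𝕜 m →L[𝕜] EuclideanSpace 𝕜 m), Unitary.map_mem _ (Unitary.linearIsometryEquiv.symm e).prop, ?_⟩
  apply toEuclideanLin.injective
  rw [toLpLin_mul_same, ← coe_toEuclideanCLM_eq_toEuclideanLin, StarAlgEquiv.apply_symm_apply]
  ext x : 1
  exact (he x).symm

theorem Matrix.exists_mem_unitaryGroup_eq_mul_of_mul_conjTranspose_self_eq {M N : Matrix m n 𝕜}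
    (h : M * Mᴴ = N * Nᴴ) : ∃ U ∈ unitaryGroup n 𝕜, N = M * U := by
  obtain ⟨U, hU, hNU⟩ := exists_mem_unitaryGroup_eq_mul_of_conjTranspose_mul_self_eq
    (M := Mᴴ) (N := Nᴴ) (by simpa only [conjTranspose_conjTranspose] using h)
  refine ⟨Uᴴ, Unitary.star_mem hU, ?_⟩
  rw [← conjTranspose_conjTranspose N, hNU, conjTranspose_mul, conjTranspose_conjTranspose]

end GramFreedom

theorem ptraceH_outer_vec {d k : ℕ} (X : Matrix (Fin k) (Fin d) ℂ) :
    ptraceH (outer (Matrix.vec X) (Matrix.vec X)) = X * Xᴴ := by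
  ext j j'
  simp [ptraceH, outer, mul_apply]

theorem uhlmann_unitary_freedom_general {d : ℕ} (ψ φ : Fin d × Fin d → ℂ)
    (h : ptraceH (outer ψ ψ) = ptraceH (outer φ φ)) :
    ∃ U ∈ Matrix.unitaryGroup (Fin d) ℂ,
      φ = (U ⊗ₖ (1 : Matrix (Fin d) (Fin d) ℂ)).mulVec ψ := by
  obtain ⟨X, rfl⟩ := Matrix.vec_bijective.surjective ψ
  obtain ⟨Y, rfl⟩ := Matrix.vec_bijective.surjective φ
  rw [ptraceH_outer_vec, ptraceH_outer_vec] at h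
  obtain ⟨V, hV, rfl⟩ := exists_mem_unitaryGroup_eq_mul_of_mul_conjTranspose_self_eq h
  refine ⟨Vᵀ, transpose_mem_unitaryGroup_iff.mpr hV, ?_⟩
  rw [kronecker_mulVec_vec, Matrix.one_mul, transpose_transpose]

theorem uhlmann_unitary_freedom {d : ℕ} (ψ φ : Fin d × Fin d → ℂ)
    (hψ : ∑ p, ‖ψ p‖ ^ 2 = 1) (hφ : ∑ p, ‖φ p‖ ^ 2 = 1)
    (h : ptraceH (outer ψ ψ) = ptraceH (outer φ φ)) :
    ∃ U ∈ Matrix.unitaryGroup (Fin d) ℂ,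
      φ = (U ⊗ₖ (1 : Matrix (Fin d) (Fin d) ℂ)).mulVec ψ :=
  uhlmann_unitary_freedom_general ψ φ h
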